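/- Let N_1,…,N_m be positive integers and let G be a subgroup of S_{N_1}×…×S_{N_m} such that every projection G → S_{N_i} is surjective and the combined permutation-sign map G → (S_{N_1}/A_{N_1})×…×(S_{N_m}/A_{N_m}) ≅ {±1}^m is surjective. Then G = S_{N_1}×…×S_{N_m}. -/

import Mathlib

/-!
Surjectivity of `G` onto the coordinates in a finite set `s` extends to `insert i s`. The `i`-th
coordinates of the elements of `G` that are trivial on `s` form a normal subgroup `K` of
`Perm (α i)`. If `K` were even, the sign of the `i`-th coordinate of `g ∈ G` would be a homomorphic
function of the coordinates of `g` on `s`; every homomorphism to `ℤˣ` kills tuples of even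
permutations, which contradicts the element of `G` with odd `i`-th and even other coordinates.
So `K` contains an odd permutation, and a normal subgroup of a symmetric group containing an odd
permutation is the whole group.
-/

open Subgroup

namespace Equiv.Perm

variable {α : Type*} [Fintype α] [DecidableEq α] {K : Subgroup (Perm α)} {τ : Perm α}

theorem alternatingGroup_le_ker (φ : Perm α →* ℤˣ) : alternatingGroup α ≤ φ.ker := by
  intro σ hσ
  rw [MonoidHom.mem_ker]
  by_cases h : ∃ g, φ g = -1
  · obtain ⟨g, hg⟩ := h
    have hφ : Function.Surjective φ := fun u => by
      rcases Int.units_eq_one_or u with rfl | rfl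
      exacts [⟨1, map_one φ⟩, ⟨g, hg⟩]
    rwa [eq_sign_of_surjective_hom hφ]
  · push Not at h
    exact (Int.units_eq_one_or _).resolve_right (h σ)

theorem pi_alternatingGroup_le_ker {ι : Type*} [Finite ι] [DecidableEq ι] {α : ι → Type*}
    [∀ i, Fintype (α i)] [∀ i, DecidableEq (α i)] (φ : (∀ i, Perm (α i)) →* ℤˣ) :
    pi .univ (fun i => alternatingGroup (α i)) ≤ φ.ker :=
  pi_le_iff.mpr fun i => map_le_iff_le_comap.mpr <| by
    rw [MonoidHom.comap_ker]
    exact alternatingGroup_le_ker _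

theorem eq_top_of_alternatingGroup_le (hA : alternatingGroup α ≤ K) (hτ : τ ∈ K)
    (hs : sign τ = -1) : K = ⊤ := by
  refine (eq_top_iff' K).mpr fun σ => ?_
  rcases Int.units_eq_one_or (sign σ) with h | h
  · exact hA h
  · have hστ : σ * τ⁻¹ ∈ K := hA (by simp [mem_alternatingGroup, h, hs])
    simpa using K.mul_mem hστ hτ

theorem IsThreeCycle.alternatingGroup_le_of_mem [K.Normal] {c : Perm α} (hc : c.IsThreeCycle)
    (hcK : c ∈ K) : alternatingGroup α ≤ K := by
  rw [← closure_three_cycles_eq_alternating, closure_le]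
  intro d hd
  obtain ⟨π, hπ⟩ :=
    isConj_iff.mp (isConj_of_cycleType_eq (hc.cycleType.trans hd.cycleType.symm))
  rw [← hπ]
  exact Normal.conj_mem ‹_› c hcK π

theorem IsSwap.eq_top_of_mem [K.Normal] {σ : Perm α} (hσ : σ.IsSwap) (hσK : σ ∈ K) : K = ⊤ := by
  rw [eq_top_iff, ← closure_isSwap, closure_le]
  obtain ⟨a, b, hab, rfl⟩ := hσ
  rintro _ ⟨c, d, hcd, rfl⟩
  obtain ⟨π, hπ⟩ := isConj_iff.mp (isConj_swap hab hcd)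
  rw [← hπ]
  exact Normal.conj_mem ‹_› _ hσK π

theorem alternatingGroup_le_of_apply_apply_ne [K.Normal] (hτ : τ ∈ K) {a : α} (h₁ : τ a ≠ a)
    (h₂ : τ (τ a) ≠ a) : alternatingGroup α ≤ K := by
  have h₃ : τ (τ a) ≠ τ a := fun h => h₁ (τ.injective h)
  -- the 3-cycle is the commutator `⁅τ, swap a (τ a)⁆`
  have hc : (swap (τ a) (τ (τ a)) * swap (τ a) a).IsThreeCycle :=
    isThreeCycle_swap_mul_swap_same h₃.symm h₁ h₂
  refine hc.alternatingGroup_le_of_mem ?_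
  have hconj : τ * swap a (τ a) * τ⁻¹ = swap (τ a) (τ (τ a)) := by
    rw [← swap_apply_apply]
  rw [swap_comm (τ a) a, ← hconj, mul_assoc τ, mul_assoc τ, ← swap_inv a]
  exact K.mul_mem hτ (Normal.conj_mem ‹_› _ (K.inv_mem hτ) _)

theorem isSwap_of_sq_eq_one (hα : Fintype.card α ≤ 4) (hsq : τ ^ 2 = 1) (hs : sign τ = -1) :
    τ.IsSwap := by
  rw [sign_of_pow_two_eq_one hsq, card_fixedPoints, sum_cycleType,
    Nat.sub_sub_self τ.support.card_le_univ] at hs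
  obtain ⟨k, hk⟩ := two_dvd_card_support hsq
  have hk2 : k ≤ 2 := by linarith [τ.support.card_le_univ]
  rw [← card_support_eq_two, hk]
  rw [hk] at hs
  interval_cases k <;> simp_all

theorem eq_top_of_mem_of_sign_eq_neg_one [K.Normal] (hτ : τ ∈ K) (hs : sign τ = -1) :
    K = ⊤ := by
  rcases le_or_gt 5 (Fintype.card α) with h5 | h4
  · have : Nontrivial K := (nontrivial_iff_ne_bot K).mpr fun h => by
      rw [h, mem_bot] at hτ
      simp [hτ] at hs
    exact eq_top_of_alternatingGroup_le
      (alternatingGroup_le_of_normal (by simpa using h5) this) hτ hs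
  by_cases h : ∃ a, τ a ≠ a ∧ τ (τ a) ≠ a
  · obtain ⟨a, h₁, h₂⟩ := h
    exact eq_top_of_alternatingGroup_le (alternatingGroup_le_of_apply_apply_ne hτ h₁ h₂) hτ hs
  · push Not at h
    have hsq : τ ^ 2 = 1 := ext fun a => by
      by_cases ha : τ a = a
      · simp [sq, mul_apply, ha]
      · simpa [sq, mul_apply] using h a ha
    exact (isSwap_of_sq_eq_one (by omega) hsq hs).eq_top_of_mem hτ

end Equiv.Perm

theorem Subgroup.normal_map_eval_inf_pi_bot {ι : Type*} {M : ι → Type*} [∀ i, Group (M i)]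
    {G : Subgroup (∀ i, M i)} (s : Set ι) {i : ι} (hi : ∀ τ : M i, ∃ σ ∈ G, σ i = τ) :
    ((G ⊓ pi s fun j => (⊥ : Subgroup (M j))).map (Pi.evalMonoidHom M i)).Normal := by
  constructor
  rintro _ ⟨h, ⟨hG, hs⟩, rfl⟩ π
  obtain ⟨g, hg, rfl⟩ := hi π
  refine ⟨g * h * g⁻¹, ⟨G.mul_mem (G.mul_mem hg hG) (G.inv_mem hg), fun j hj => ?_⟩, rfl⟩
  simp [mem_bot.mp (hs j hj)]

namespace Equiv.Perm

variable {ι : Type*} [DecidableEq ι] {α : ι → Type*} [∀ i, Fintype (α i)]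
  [∀ i, DecidableEq (α i)] {G : Subgroup (∀ i, Perm (α i))} {s : Finset ι} {i : ι}

theorem sign_apply_eq_one_of_sign_eq_one_on [Finite ι]
    (hs : ∀ x : ∀ j, Perm (α j), ∃ g ∈ G, ∀ j ∈ s, g j = x j)
    (hker : ∀ h ∈ G, (∀ j ∈ s, h j = 1) → sign (h i) = 1) {g : ∀ j, Perm (α j)} (hg : g ∈ G)
    (heven : ∀ j ∈ s, sign (g j) = 1) : sign (g i) = 1 := by
  have hwd : ∀ g ∈ G, ∀ g' ∈ G, (∀ j ∈ s, g j = g' j) → sign (g i) = sign (g' i) := by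
    intro g hg g' hg' hgg'
    have := hker (g'⁻¹ * g) (G.mul_mem (G.inv_mem hg') hg) fun j hj => by simp [hgg' j hj]
    exact (inv_mul_eq_one.mp (by simpa using this)).symm
  choose rep hrepG hrep using hs
  let χ : (∀ j, Perm (α j)) →* ℤˣ :=
    { toFun := fun x => sign (rep x i)
      map_one' := (hwd _ (hrepG 1) 1 G.one_mem (hrep 1)).trans (map_one _)
      map_mul' := fun x y => (hwd _ (hrepG _) _ (G.mul_mem (hrepG x) (hrepG y))
        fun j hj => by simp [hrep _ j hj]).trans (map_mul _ _ _) }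
  let e : ∀ j, Perm (α j) := fun j => if j ∈ s then g j else 1
  have he : e ∈ pi .univ fun j => alternatingGroup (α j) := fun j _ => by
    by_cases hj : j ∈ s <;> simp [e, hj, heven, mem_alternatingGroup]
  calc sign (g i) = χ e := hwd g hg _ (hrepG e) fun j hj => by simp [e, hj, hrep e j hj]
    _ = 1 := pi_alternatingGroup_le_ker χ he

theorem exists_mem_forall_mem_insert_eq [Finite ι] (hi : i ∉ s)
    (hproj : ∀ τ : Perm (α i), ∃ σ ∈ G, σ i = τ)
    (hsign : ∀ u : ι → ℤˣ, ∃ σ ∈ G, ∀ j, sign (σ j) = u j)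
    (hs : ∀ x : ∀ j, Perm (α j), ∃ g ∈ G, ∀ j ∈ s, g j = x j) (x : ∀ j, Perm (α j)) :
    ∃ g ∈ G, ∀ j ∈ insert i s, g j = x j := by
  set K := (G ⊓ pi s fun j => (⊥ : Subgroup (Perm (α j)))).map (Pi.evalMonoidHom _ i)
  have : K.Normal := normal_map_eval_inf_pi_bot _ hproj
  have hodd : ∃ τ ∈ K, sign τ = -1 := by
    by_contra! hK
    obtain ⟨σ, hσ, hσu⟩ := hsign (Pi.mulSingle i (-1))
    have := sign_apply_eq_one_of_sign_eq_one_on hs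
      (fun h hG h1 => (Int.units_eq_one_or _).resolve_right
        (hK _ ⟨h, ⟨hG, fun j hj => mem_bot.mpr (h1 j hj)⟩, rfl⟩)) hσ
      (fun j hj => by rw [hσu, Pi.mulSingle_eq_of_ne (ne_of_mem_of_not_mem hj hi)])
    rw [hσu, Pi.mulSingle_eq_same] at this
    exact absurd this (by decide)
  obtain ⟨τ, hτK, hτ⟩ := hodd
  obtain ⟨g, hg, hgx⟩ := hs x
  obtain ⟨h, ⟨hG, h1⟩, hhi⟩ : (g i)⁻¹ * x i ∈ K := by
    rw [eq_top_of_mem_of_sign_eq_neg_one hτK hτ]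
    exact mem_top _
  refine ⟨g * h, G.mul_mem hg hG, (Finset.forall_mem_insert _ _ _).mpr ⟨?_, fun j hj => ?_⟩⟩
  · simp [show h i = (g i)⁻¹ * x i from hhi]
  · simp [mem_bot.mp (h1 j hj), hgx j hj]

theorem subgroup_pi_eq_top_of_surjective_eval_of_surjective_sign [Fintype ι]
    (hproj : ∀ (i : ι) (τ : Perm (α i)), ∃ σ ∈ G, σ i = τ)
    (hsign : ∀ u : ι → ℤˣ, ∃ σ ∈ G, ∀ i, sign (σ i) = u i) : G = ⊤ := by
  have hfin : ∀ (s : Finset ι) (x : ∀ j, Perm (α j)), ∃ g ∈ G, ∀ j ∈ s, g j = x j := by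
    intro s
    induction s using Finset.induction_on with
    | empty => exact fun x => ⟨1, G.one_mem, by simp⟩
    | insert i s hi ih => exact exists_mem_forall_mem_insert_eq hi (hproj i) hsign ih
  refine (eq_top_iff' G).mpr fun x => ?_
  obtain ⟨g, hg, hgx⟩ := hfin Finset.univ x
  rwa [← funext fun j => hgx j (Finset.mem_univ j)]

end Equiv.Perm

theorem subgroup_of_product_of_symmetric_groups_eq_top_general
    (m : ℕ) (N : Fin m → ℕ)
    (G : Subgroup (∀ i : Fin m, Equiv.Perm (Fin (N i))))
    (hproj : ∀ (i : Fin m) (τ : Equiv.Perm (Fin (N i))),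
      ∃ σ ∈ G, σ i = τ)
    (hsign : ∀ s : Fin m → ℤˣ,
      ∃ σ ∈ G, ∀ i, Equiv.Perm.sign (σ i) = s i) :
    G = ⊤ :=
  Equiv.Perm.subgroup_pi_eq_top_of_surjective_eval_of_surjective_sign hproj hsign

/-- if `G ≤ S_{N_1} × … × S_{N_m}` surjects onto each factor `S_{N_i}`
and the combined sign map `G → {±1}^m` is surjective, then `G` is the full product. -/
theorem subgroup_of_product_of_symmetric_groups_eq_top
    (m : ℕ) (hm : 1 ≤ m) (N : Fin m → ℕ) (hN : ∀ i, 1 ≤ N i)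
    (G : Subgroup (∀ i : Fin m, Equiv.Perm (Fin (N i))))
    (hproj : ∀ (i : Fin m) (τ : Equiv.Perm (Fin (N i))),
      ∃ σ ∈ G, σ i = τ)
    (hsign : ∀ s : Fin m → ℤˣ,
      ∃ σ ∈ G, ∀ i, Equiv.Perm.sign (σ i) = s i) :
    G = ⊤ :=
  subgroup_of_product_of_symmetric_groups_eq_top_general m N G hproj hsign
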